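/- The number of antichains in the product poset [2] × [n] × [n+1] equals (2n+1)·C_n·C_{n+1}, where C_n = binom(2n,n)/(n+1) is the n-th Catalan number. -/

import Mathlib

open Finset

namespace Stmt13
variable {N : ℕ}

/-- suffix count: number of elements of `S` with value `≥ k`. -/
def sig (S : Finset (Fin N)) (k : ℕ) : ℕ := #(S.filter (fun j : Fin N => k ≤ j.val))

lemma sig_zero (S : Finset (Fin N)) : sig S 0 = #S := by simp [sig]

lemma sig_of_ge (S : Finset (Fin N)) {k : ℕ} (h : N ≤ k) : sig S k = 0 := by
  rw [sig, Finset.card_eq_zero, Finset.filter_eq_empty_iff]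
  intro j _; have := j.isLt; omega

def lo (S : Finset (Fin N)) (K : ℕ) : Finset (Fin N) := S.filter (fun j : Fin N => j.val < K)
def hi (S : Finset (Fin N)) (K : ℕ) : Finset (Fin N) := S.filter (fun j : Fin N => K ≤ j.val)

lemma disjoint_lo_hi (S T : Finset (Fin N)) (K : ℕ) : Disjoint (lo S K) (hi T K) := by
  rw [Finset.disjoint_left]
  intro a ha hb
  simp only [lo, hi, mem_filter] at ha hb; omega

lemma lo_union_hi (S : Finset (Fin N)) (K : ℕ) : lo S K ∪ hi S K = S := by
  ext j
  simp only [lo, hi, mem_union, mem_filter]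
  constructor
  · rintro (⟨h, _⟩ | ⟨h, _⟩) <;> exact h
  · intro h; by_cases hj : j.val < K
    · exact Or.inl ⟨h, hj⟩
    · exact Or.inr ⟨h, by omega⟩

lemma sig_union {S T : Finset (Fin N)} (h : Disjoint S T) (k : ℕ) :
    sig (S ∪ T) k = sig S k + sig T k := by
  rw [sig, Finset.filter_union, Finset.card_union_of_disjoint, sig, sig]
  exact Disjoint.mono (Finset.filter_subset _ _) (Finset.filter_subset _ _) h

lemma sig_anti (S : Finset (Fin N)) {k k' : ℕ} (h : k ≤ k') : sig S k' ≤ sig S k := by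
  apply Finset.card_le_card
  intro j hj
  rw [mem_filter] at hj ⊢
  exact ⟨hj.1, by omega⟩

lemma sig_hi (S : Finset (Fin N)) (K k : ℕ) : sig (hi S K) k = sig S (max k K) := by
  rw [sig, sig]; congr 1
  ext j
  simp only [hi, mem_filter, and_assoc]
  constructor
  · rintro ⟨h1, h2, h3⟩; exact ⟨h1, by omega⟩
  · rintro ⟨h1, h2⟩; exact ⟨h1, by omega, by omega⟩

lemma sig_lo (S : Finset (Fin N)) (K k : ℕ) :
    sig (lo S K) k + sig S (max k K) = sig S k := by
  conv_rhs => rw [← lo_union_hi S K]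
  rw [sig_union (disjoint_lo_hi S S K), sig_hi]

lemma lo_lo (S : Finset (Fin N)) (K : ℕ) : lo (lo S K) K = lo S K := by
  ext j; simp only [lo, mem_filter]; tauto

lemma hi_hi (S : Finset (Fin N)) (K : ℕ) : hi (hi S K) K = hi S K := by
  ext j; simp only [hi, mem_filter]; tauto

lemma lo_hi_empty (S : Finset (Fin N)) (K : ℕ) : lo (hi S K) K = ∅ := by
  ext j; simp only [lo, hi, mem_filter, notMem_empty, iff_false]; rintro ⟨⟨_, h1⟩, h2⟩; omega

lemma hi_lo_empty (S : Finset (Fin N)) (K : ℕ) : hi (lo S K) K = ∅ := by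
  ext j; simp only [lo, hi, mem_filter, notMem_empty, iff_false]; rintro ⟨⟨_, h1⟩, h2⟩; omega

/-- violation: somewhere the suffix count of `A` exceeds that of `B`. -/
def viol (A B : Finset (Fin N)) : Prop := ∃ k, sig B k < sig A k

lemma viol_lt {A B : Finset (Fin N)} {k : ℕ} (h : sig B k < sig A k) : k < N := by
  by_contra h'
  rw [sig_of_ge A (by omega), sig_of_ge B (by omega)] at h; omega

/-- the largest violation index. -/
def kst (A B : Finset (Fin N)) : ℕ := Nat.findGreatest (fun k => sig B k < sig A k) N

lemma kst_spec {A B : Finset (Fin N)} (h : viol A B) :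
    sig B (kst A B) < sig A (kst A B) := by
  obtain ⟨k, hk⟩ := h
  exact Nat.findGreatest_spec (P := fun k => sig B k < sig A k)
    (le_of_lt (viol_lt hk)) hk

lemma kst_max (A B : Finset (Fin N)) {j : ℕ} (hj : kst A B < j) :
    ¬ (sig B j < sig A j) := by
  by_cases hjN : j ≤ N
  · exact Nat.findGreatest_is_greatest (P := fun k => sig B k < sig A k) hj hjN
  · rw [sig_of_ge A (by omega), sig_of_ge B (by omega)]; omega

lemma kst_lt {A B : Finset (Fin N)} (h : viol A B) : kst A B < N := viol_lt (kst_spec h)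

lemma sig_succ (S : Finset (Fin N)) {k : ℕ} (hk : k < N) :
    sig S k = sig S (k+1) + (if (⟨k, hk⟩ : Fin N) ∈ S then 1 else 0) := by
  have hsplit : S.filter (fun j : Fin N => k ≤ j.val) =
      S.filter (fun j : Fin N => k+1 ≤ j.val) ∪ S.filter (fun j : Fin N => j = (⟨k, hk⟩ : Fin N)) := by
    ext j
    simp only [mem_filter, mem_union, Fin.ext_iff]
    constructor
    · rintro ⟨hj, h2⟩
      rcases Nat.lt_or_ge k (j : ℕ) with h | h
      · exact Or.inl ⟨hj, by omega⟩
      · exact Or.inr ⟨hj, by omega⟩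
    · rintro (⟨hj, h2⟩ | ⟨hj, h2⟩) <;> exact ⟨hj, by omega⟩
  rw [sig, hsplit, Finset.card_union_of_disjoint, Finset.filter_eq']
  · rw [sig]; split_ifs <;> simp
  · rw [Finset.disjoint_left]
    intro a ha hb
    simp only [mem_filter, Fin.ext_iff] at ha hb; omega

lemma kst_step {A B : Finset (Fin N)} (h : viol A B) :
    sig A (kst A B) = sig B (kst A B) + 1 ∧
      ((⟨kst A B, kst_lt h⟩ : Fin N) ∈ A ∧ (⟨kst A B, kst_lt h⟩ : Fin N) ∉ B) := by
  have hK := kst_spec h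
  have hKN := kst_lt h
  have h1 : sig A (kst A B + 1) ≤ sig B (kst A B + 1) := by
    have := kst_max A B (j := kst A B + 1) (by omega); omega
  have h2 := sig_succ A hKN
  have h3 := sig_succ B hKN
  have h4 : sig B (kst A B + 1) ≤ sig B (kst A B) := sig_anti B (by omega)
  by_cases hA : (⟨kst A B, hKN⟩ : Fin N) ∈ A <;> by_cases hB : (⟨kst A B, hKN⟩ : Fin N) ∈ B <;>
    simp only [hA, hB, if_true, if_false] at h2 h3 <;>
    first
      | exact ⟨by omega, hA, hB⟩
      | omega


def swapU (A B : Finset (Fin N)) : Finset (Fin N) := lo B (kst A B) ∪ hi A (kst A B)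
def swapV (A B : Finset (Fin N)) : Finset (Fin N) := lo A (kst A B) ∪ hi B (kst A B)

lemma sig_swapU (A B : Finset (Fin N)) (h : viol A B) (k : ℕ) :
    sig (swapU A B) k = if kst A B ≤ k then sig A k else sig B k + 1 := by
  have hstep := (kst_step h).1
  have e0 := sig_union (disjoint_lo_hi B A (kst A B)) (S := lo B (kst A B)) (T := hi A (kst A B)) k
  have e1 := sig_lo B (kst A B) k
  have e2 := sig_hi A (kst A B) k
  rw [swapU, e0]
  by_cases hc : kst A B ≤ k
  · rw [max_eq_left hc] at e1 e2
    rw [if_pos hc]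
    omega
  · rw [max_eq_right (by omega)] at e1 e2
    rw [if_neg hc]
    omega

lemma sig_swapV (A B : Finset (Fin N)) (h : viol A B) (k : ℕ) :
    sig (swapV A B) k + (if kst A B ≤ k then 0 else 1) = if kst A B ≤ k then sig B k else sig A k := by
  have hstep := (kst_step h).1
  have e0 := sig_union (disjoint_lo_hi A B (kst A B)) (S := lo A (kst A B)) (T := hi B (kst A B)) k
  have e1 := sig_lo A (kst A B) k
  have e2 := sig_hi B (kst A B) k
  rw [swapV, e0]
  by_cases hc : kst A B ≤ k
  · rw [max_eq_left hc] at e1 e2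
    simp only [if_pos hc]
    omega
  · rw [max_eq_right (by omega)] at e1 e2
    simp only [if_neg hc]
    omega

lemma viol_swap (A B : Finset (Fin N)) (h : viol A B) : viol (swapU A B) (swapV A B) := by
  refine ⟨kst A B, ?_⟩
  have h1 := sig_swapU A B h (kst A B)
  have h2 := sig_swapV A B h (kst A B)
  have h3 := kst_spec h
  simp only [le_refl, if_pos] at h1 h2
  omega

lemma kst_swap (A B : Finset (Fin N)) (h : viol A B) :
    kst (swapU A B) (swapV A B) = kst A B := by
  rw [kst, Nat.findGreatest_eq_iff]
  refine ⟨le_of_lt (kst_lt h), fun _ => ?_, fun j hj hjN => ?_⟩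
  · have h1 := sig_swapU A B h (kst A B)
    have h2 := sig_swapV A B h (kst A B)
    have h3 := kst_spec h
    simp only [le_refl, if_pos] at h1 h2
    omega
  · have h1 := sig_swapU A B h j
    have h2 := sig_swapV A B h j
    have h4 := kst_max A B hj
    simp only [if_pos (le_of_lt hj)] at h1 h2
    omega

lemma lo_swapU (A B : Finset (Fin N)) : lo (swapU A B) (kst A B) = lo B (kst A B) := by
  rw [swapU, lo, Finset.filter_union, ← lo, ← lo, lo_lo, lo_hi_empty, union_empty]

lemma hi_swapU (A B : Finset (Fin N)) : hi (swapU A B) (kst A B) = hi A (kst A B) := by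
  rw [swapU, hi, Finset.filter_union, ← hi, ← hi, hi_lo_empty, hi_hi, empty_union]

lemma lo_swapV (A B : Finset (Fin N)) : lo (swapV A B) (kst A B) = lo A (kst A B) := by
  rw [swapV, lo, Finset.filter_union, ← lo, ← lo, lo_lo, lo_hi_empty, union_empty]

lemma hi_swapV (A B : Finset (Fin N)) : hi (swapV A B) (kst A B) = hi B (kst A B) := by
  rw [swapV, hi, Finset.filter_union, ← hi, ← hi, hi_lo_empty, hi_hi, empty_union]

lemma swap_swap (A B : Finset (Fin N)) (h : viol A B) :
    swapU (swapU A B) (swapV A B) = A ∧ swapV (swapU A B) (swapV A B) = B := by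
  constructor
  · rw [swapU, kst_swap A B h, lo_swapV, hi_swapU, lo_union_hi]
  · rw [swapV, kst_swap A B h, lo_swapU, hi_swapV, lo_union_hi]

lemma card_swapU (A B : Finset (Fin N)) (h : viol A B) : #(swapU A B) = #B + 1 := by
  have h1 := sig_swapU A B h 0
  have h2 := (kst_step h).1
  have z1 := sig_zero (swapU A B)
  have z2 := sig_zero A
  have z3 := sig_zero B
  by_cases hc : kst A B = 0
  · rw [hc] at h1 h2
    simp only [le_refl, if_pos] at h1
    omega
  · rw [if_neg (by omega)] at h1
    omega

lemma card_swapV (A B : Finset (Fin N)) (h : viol A B) : #(swapV A B) + 1 = #A := by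
  have h1 := sig_swapV A B h 0
  have h2 := (kst_step h).1
  have z1 := sig_zero (swapV A B)
  have z2 := sig_zero A
  have z3 := sig_zero B
  by_cases hc : kst A B = 0
  · rw [hc] at h1 h2
    simp only [le_refl, if_pos] at h1
    omega
  · rw [if_neg (by omega), if_neg (by omega)] at h1
    omega


/-- dominance: `B`'s suffix counts are everywhere at least `A`'s. -/
def Dom (A B : Finset (Fin N)) : Prop := ∀ k < N, sig A k ≤ sig B k

instance (A B : Finset (Fin N)) : Decidable (Dom A B) := by
  unfold Dom; infer_instance

lemma not_dom_iff_viol (A B : Finset (Fin N)) : ¬ Dom A B ↔ viol A B := by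
  unfold Dom viol
  push_neg
  constructor
  · rintro ⟨k, _, h⟩; exact ⟨k, h⟩
  · rintro ⟨k, h⟩; exact ⟨k, viol_lt h, h⟩

lemma dom_iff (A B : Finset (Fin N)) : Dom A B ↔ ∀ k, sig A k ≤ sig B k := by
  constructor
  · intro h k
    by_cases hk : k < N
    · exact h k hk
    · rw [sig_of_ge A (by omega), sig_of_ge B (by omega)]
  · intro h k _; exact h k

lemma card_cross (N m : ℕ) :
    Fintype.card {q : Finset (Fin N) × Finset (Fin N) //
        (#q.1 = m + 1 ∧ #q.2 = m + 1) ∧ ¬ Dom q.1 q.2}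
      = Fintype.card {q : Finset (Fin N) × Finset (Fin N) // #q.1 = m + 2 ∧ #q.2 = m} := by
  apply Fintype.card_congr
  refine ⟨fun x => ⟨(swapU x.1.1 x.1.2, swapV x.1.1 x.1.2), ?_⟩,
          fun x => ⟨(swapU x.1.1 x.1.2, swapV x.1.1 x.1.2), ?_⟩, ?_, ?_⟩
  · obtain ⟨⟨q1, q2⟩, ⟨⟨hc1, hc2⟩, hnd⟩⟩ := x
    have hc1' : #q1 = m + 1 := hc1
    have hc2' : #q2 = m + 1 := hc2
    have hv := (not_dom_iff_viol q1 q2).mp hnd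
    have h1 := card_swapU q1 q2 hv
    have h2 := card_swapV q1 q2 hv
    exact ⟨show #(swapU q1 q2) = m + 2 by omega, show #(swapV q1 q2) = m by omega⟩
  · obtain ⟨⟨q1, q2⟩, ⟨hc1, hc2⟩⟩ := x
    have hc1' : #q1 = m + 2 := hc1
    have hc2' : #q2 = m := hc2
    have hv : viol q1 q2 := ⟨0, by rw [sig_zero, sig_zero]; omega⟩
    have h1 := card_swapU q1 q2 hv
    have h2 := card_swapV q1 q2 hv
    refine ⟨⟨show #(swapU q1 q2) = m + 1 by omega, show #(swapV q1 q2) = m + 1 by omega⟩, ?_⟩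
    exact (not_dom_iff_viol _ _).mpr (viol_swap q1 q2 hv)
  · rintro ⟨⟨q1, q2⟩, ⟨⟨hc1, hc2⟩, hnd⟩⟩
    have hv := (not_dom_iff_viol q1 q2).mp hnd
    apply Subtype.ext
    have := swap_swap q1 q2 hv
    exact Prod.ext this.1 this.2
  · rintro ⟨⟨q1, q2⟩, ⟨hc1, hc2⟩⟩
    have hc1' : #q1 = m + 2 := hc1
    have hc2' : #q2 = m := hc2
    have hv : viol q1 q2 := ⟨0, by rw [sig_zero, sig_zero]; omega⟩
    apply Subtype.ext
    have := swap_swap q1 q2 hv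
    exact Prod.ext this.1 this.2

lemma card_split {α : Type*} [Fintype α] (P Q : α → Prop)
    [DecidablePred P] [DecidablePred Q] :
    Fintype.card {x // P x ∧ Q x} + Fintype.card {x // P x ∧ ¬ Q x}
      = Fintype.card {x // P x} := by
  simp only [Fintype.card_subtype]
  have h1 : ∀ (R : α → Prop) [DecidablePred R],
      filter (fun x => P x ∧ R x) univ = filter R (filter P univ) := by
    intro R _
    rw [Finset.filter_filter]
  rw [h1 Q, h1 (fun x => ¬ Q x)]
  exact Finset.card_filter_add_card_filter_not Q

lemma card_all (N a b : ℕ) :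
    Fintype.card {q : Finset (Fin N) × Finset (Fin N) // #q.1 = a ∧ #q.2 = b}
      = N.choose a * N.choose b := by
  rw [Fintype.card_congr (Equiv.subtypeProdEquivProd
    (p := fun s : Finset (Fin N) => #s = a) (q := fun s : Finset (Fin N) => #s = b)), Fintype.card_prod,
    Fintype.card_finset_len, Fintype.card_finset_len, Fintype.card_fin]

lemma card_dom (N m : ℕ) :
    Fintype.card {q : Finset (Fin N) × Finset (Fin N) //
        (#q.1 = m + 1 ∧ #q.2 = m + 1) ∧ Dom q.1 q.2}
      + N.choose (m + 2) * N.choose m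
      = N.choose (m + 1) * N.choose (m + 1) := by
  rw [← card_all N (m+2) m, ← card_cross N m, ← card_all N (m+1) (m+1)]
  exact card_split _ _


section Antichain
variable {α : Type*} [PartialOrder α] [Fintype α] [DecidableEq α]
  [DecidableRel ((· ≤ ·) : α → α → Prop)]

def achToLow (A : Finset α) : Finset α := univ.filter (fun x => ∃ a ∈ A, x ≤ a)
def lowToAch (L : Finset α) : Finset α := L.filter (fun x => ∀ y ∈ L, x ≤ y → x = y)

lemma mem_achToLow {A : Finset α} {x : α} : x ∈ achToLow A ↔ ∃ a ∈ A, x ≤ a := by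
  simp [achToLow]

lemma mem_lowToAch {L : Finset α} {x : α} :
    x ∈ lowToAch L ↔ x ∈ L ∧ ∀ y ∈ L, x ≤ y → x = y := by
  simp [lowToAch]

def achEquivLow : {A : Finset α // IsAntichain (· ≤ ·) (A : Set α)}
    ≃ {L : Finset α // IsLowerSet (L : Set α)} where
  toFun A := ⟨achToLow A.1, by
    intro x y hle hx
    rw [Finset.mem_coe, mem_achToLow] at hx ⊢
    obtain ⟨a, ha, hxa⟩ := hx
    exact ⟨a, ha, le_trans hle hxa⟩⟩
  invFun L := ⟨lowToAch L.1, by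
    intro x hx y hy hne hxy
    rw [Finset.mem_coe, mem_lowToAch] at hx hy
    exact hne (hx.2 y hy.1 hxy)⟩
  left_inv A := by
    obtain ⟨A, hA⟩ := A
    apply Subtype.ext
    dsimp only
    ext x
    rw [mem_lowToAch, mem_achToLow]
    constructor
    · rintro ⟨⟨a, ha, hxa⟩, hmax⟩
      have : x = a := hmax a (mem_achToLow.mpr ⟨a, ha, le_refl a⟩) hxa
      rwa [this]
    · intro hx
      refine ⟨⟨x, hx, le_refl x⟩, fun y hy hxy => ?_⟩
      rw [mem_achToLow] at hy
      obtain ⟨b, hb, hyb⟩ := hy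
      have hxb : x ≤ b := le_trans hxy hyb
      have : x = b := by
        by_contra hne
        exact hA hx hb hne hxb
      exact le_antisymm hxy (this ▸ hyb)
  right_inv L := by
    obtain ⟨L, hL⟩ := L
    apply Subtype.ext
    dsimp only
    ext x
    rw [mem_achToLow]
    constructor
    · rintro ⟨a, ha, hxa⟩
      rw [mem_lowToAch] at ha
      exact hL hxa ha.1
    · intro hx
      obtain ⟨m, hm, hmax⟩ : ∃ m ∈ L.filter (fun y => x ≤ y), ∀ y ∈ L.filter (fun y => x ≤ y), ¬ m < y := by
        obtain ⟨m, hm1, hm2⟩ := Finset.exists_maximal (s := L.filter (fun y => x ≤ y)) ⟨x, by simp [hx]⟩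
        exact ⟨m, hm1, fun y hy hlt => hlt.not_ge (hm2 hy hlt.le)⟩
      rw [Finset.mem_filter] at hm
      refine ⟨m, ?_, hm.2⟩
      rw [mem_lowToAch]
      refine ⟨hm.1, fun y hy hmy => ?_⟩
      by_contra hne
      exact hmax y (Finset.mem_filter.mpr ⟨hy, le_trans hm.2 hmy⟩) (lt_of_le_of_ne hmy hne)
  end Antichain

section FinLower
variable {b : ℕ}

lemma mem_iff_lt_card (s : Finset (Fin b))
    (hdc : ∀ j j' : Fin b, j' ≤ j → j ∈ s → j' ∈ s) (j : Fin b) :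
    j ∈ s ↔ j.val < #s := by
  constructor
  · intro hj
    have hsub : ∀ i : Fin (j.val + 1), (⟨i.val, by have := i.isLt; have := j.isLt; omega⟩ : Fin b) ∈ s := by
      intro i
      exact hdc j _ (by rw [Fin.le_def]; exact i.is_le) hj
    have := Finset.card_le_card_of_injOn
      (f := fun i : Fin (j.val+1) => (⟨i.val, by have := i.isLt; have := j.isLt; omega⟩ : Fin b))
      (s := (univ : Finset (Fin (j.val+1)))) (t := s)
      (fun i _ => hsub i)
      (fun x _ y _ hxy => by simpa [Fin.ext_iff] using hxy)
    simp at this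
    omega
  · intro hj
    by_contra hns
    have hsub : s ⊆ univ.filter (fun y : Fin b => y.val < j.val) := by
      intro y hy
      rw [Finset.mem_filter]
      refine ⟨mem_univ y, ?_⟩
      by_contra hlt
      exact hns (hdc y j (by rw [Fin.le_def]; omega) hy)
    have hcard := Finset.card_le_card hsub
    have : #(univ.filter (fun y : Fin b => y.val < j.val)) ≤ j.val := by
      have := Finset.card_le_card_of_injOn
        (f := fun y : Fin b => y.val)
        (s := univ.filter (fun y : Fin b => y.val < j.val))
        (t := Finset.range j.val)
        (fun y hy => by rw [Finset.mem_coe, Finset.mem_filter] at hy; rw [Finset.mem_coe, Finset.mem_range]; exact hy.2)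
        (fun x _ y _ hxy => Fin.ext hxy)
      simpa using this
    omega

lemma card_filter_lt (c : ℕ) :
    #(univ.filter (fun j : Fin b => j.val < c)) = min c b := by
  set s := univ.filter (fun j : Fin b => j.val < c) with hs
  have hdc : ∀ j j' : Fin b, j' ≤ j → j ∈ s → j' ∈ s := by
    intro j j' hle hj
    rw [hs, Finset.mem_filter] at hj ⊢
    refine ⟨mem_univ _, ?_⟩
    rw [Fin.le_def] at hle
    omega
  have hmem : ∀ j : Fin b, j ∈ s ↔ j.val < c := by
    intro j; rw [hs, Finset.mem_filter]; simp
  have hcardle : #s ≤ b := le_trans (Finset.card_le_card (Finset.filter_subset _ _)) (by simp)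
  rcases Nat.lt_or_ge c b with hcb | hcb
  · rw [min_eq_left (by omega)]
    have h1 : ¬ ((⟨c, hcb⟩ : Fin b) ∈ s) := by rw [hmem]; simp
    rw [mem_iff_lt_card s hdc] at h1
    simp at h1
    by_contra hne
    have hlt : #s < c := by omega
    have h2 : (⟨#s, by omega⟩ : Fin b) ∈ s := by rw [hmem]; simpa using hlt
    rw [mem_iff_lt_card s hdc] at h2
    simp at h2
  · rw [min_eq_right hcb]
    have : s = univ := by
      ext j; rw [hmem]; simp only [mem_univ, iff_true]; have := j.isLt; omega
    rw [this]; simp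

end FinLower

section LowFun
variable {Q : Type*} [PartialOrder Q] [Fintype Q] [DecidableEq Q]
  [DecidableRel ((· ≤ ·) : Q → Q → Prop)] {b : ℕ}

def lowToFun (L : Finset (Q × Fin b)) : Q → ℕ :=
  fun q => #(univ.filter (fun j : Fin b => (q, j) ∈ L))

def funToLow (F : Q → ℕ) : Finset (Q × Fin b) :=
  univ.filter (fun z : Q × Fin b => z.2.val < F z.1)

lemma lowToFun_mem {L : Finset (Q × Fin b)} (hL : IsLowerSet (L : Set (Q × Fin b)))
    (q : Q) (j : Fin b) : (q, j) ∈ L ↔ j.val < lowToFun L q := by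
  rw [lowToFun]
  have hmem : (q, j) ∈ L ↔ j ∈ univ.filter (fun j : Fin b => (q, j) ∈ L) := by simp
  rw [hmem]
  apply mem_iff_lt_card
  intro j j' hle hj
  rw [Finset.mem_filter] at hj ⊢
  refine ⟨mem_univ _, ?_⟩
  exact hL (show (q, j') ≤ (q, j) from ⟨le_refl q, hle⟩) hj.2

def lowEquivFun : {L : Finset (Q × Fin b) // IsLowerSet (L : Set (Q × Fin b))}
    ≃ {F : Q → ℕ // Antitone F ∧ ∀ q, F q ≤ b} where
  toFun L := ⟨lowToFun L.1, by
    constructor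
    · intro q q' hq
      apply Finset.card_le_card
      intro j hj
      rw [Finset.mem_filter] at hj ⊢
      exact ⟨mem_univ _, L.2 (show (q, j) ≤ (q', j) from ⟨hq, le_refl j⟩) hj.2⟩
    · intro q
      calc #(univ.filter (fun j : Fin b => (q, j) ∈ L.1)) ≤ #(univ : Finset (Fin b)) :=
            Finset.card_le_card (Finset.filter_subset _ _)
        _ = b := by simp⟩
  invFun F := ⟨funToLow F.1, by
    rintro ⟨q, j⟩ ⟨q', j'⟩ ⟨hq, hj⟩ hmem
    rw [Finset.mem_coe, funToLow, Finset.mem_filter] at hmem ⊢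
    refine ⟨mem_univ _, ?_⟩
    have h1 : F.1 q ≤ F.1 q' := F.2.1 hq
    have h2 : j'.val ≤ j.val := hj
    have h3 : j.val < F.1 q := hmem.2
    show j'.val < F.1 q'
    omega⟩
  left_inv L := by
    apply Subtype.ext
    dsimp only
    ext z
    obtain ⟨q, j⟩ := z
    rw [funToLow, Finset.mem_filter]
    rw [← lowToFun_mem L.2 q j]
    simp
  right_inv F := by
    apply Subtype.ext
    dsimp only
    funext q
    rw [lowToFun]
    have : (univ.filter (fun j : Fin b => (q, j) ∈ funToLow F.1))
        = univ.filter (fun j : Fin b => j.val < F.1 q) := by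
      ext j
      rw [Finset.mem_filter, Finset.mem_filter, funToLow, Finset.mem_filter]
      simp
    rw [this, card_filter_lt, min_eq_left (F.2.2 q)]

end LowFun

section Split
variable {n c : ℕ}

def splitEquiv : {F : Fin 2 × Fin n → ℕ // Antitone F ∧ ∀ x, F x ≤ c}
    ≃ {p : (Fin n → ℕ) × (Fin n → ℕ) //
        (Antitone p.1 ∧ ∀ i, p.1 i ≤ c) ∧ (Antitone p.2 ∧ ∀ i, p.2 i ≤ c) ∧
          ∀ i, p.2 i ≤ p.1 i} where
  toFun F := ⟨(fun i => F.1 (0, i), fun i => F.1 (1, i)), by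
    refine ⟨⟨?_, fun i => F.2.2 _⟩, ⟨?_, fun i => F.2.2 _⟩, fun i => ?_⟩
    · intro i i' h; exact F.2.1 (Prod.mk_le_mk.mpr ⟨le_refl (0 : Fin 2), h⟩)
    · intro i i' h; exact F.2.1 (Prod.mk_le_mk.mpr ⟨le_refl (1 : Fin 2), h⟩)
    · exact F.2.1 (Prod.mk_le_mk.mpr ⟨(by decide : (0 : Fin 2) ≤ 1), le_refl i⟩)⟩
  invFun p := ⟨fun x => if x.1 = 0 then p.1.1 x.2 else p.1.2 x.2, by
    obtain ⟨⟨g, f⟩, ⟨hg, hgb⟩, ⟨hf, hfb⟩, hfg⟩ := p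
    constructor
    · rintro ⟨a, i⟩ ⟨a', i'⟩ ⟨ha, hi⟩
      dsimp only at *
      fin_cases a <;> fin_cases a' <;> simp only [reduceIte, Fin.isValue] <;>
        first
          | exact hg hi
          | exact hf hi
          | exact le_trans (hf hi) (hfg i)
          | exact absurd ha (by decide)
    · rintro ⟨a, i⟩
      dsimp only
      split <;> [exact hgb i; exact hfb i]⟩
  left_inv F := by
    apply Subtype.ext
    funext x
    obtain ⟨a, i⟩ := x
    dsimp only
    fin_cases a <;> simp
  right_inv p := by
    apply Subtype.ext
    dsimp only
    ext i <;> simp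

end Split

section Enc
variable {n : ℕ}

def encv (f : Fin n → ℕ) (i : Fin n) : ℕ := f i + (n - 1 - i.val)

lemma encv_lt (f : Fin n → ℕ) (hb : ∀ i, f i ≤ n+1) (i : Fin n) : encv f i < 2*n+1 := by
  have := i.isLt; have := hb i; unfold encv; omega

def enc (f : Fin n → ℕ) (hb : ∀ i, f i ≤ n+1) : Finset (Fin (2*n+1)) :=
  univ.image (fun i => (⟨encv f i, encv_lt f hb i⟩ : Fin (2*n+1)))

lemma encv_anti {f : Fin n → ℕ} (hf : Antitone f) :
    ∀ i i' : Fin n, i < i' → encv f i' < encv f i := by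
  intro i i' h
  have h1 : f i' ≤ f i := hf (le_of_lt h)
  have := i'.isLt
  rw [Fin.lt_def] at h
  unfold encv; omega

lemma enc_inj {f : Fin n → ℕ} (hf : Antitone f) (hb : ∀ i, f i ≤ n+1) :
    Function.Injective (fun i => (⟨encv f i, encv_lt f hb i⟩ : Fin (2*n+1))) := by
  intro i i' h
  have hv : encv f i = encv f i' := by simpa [Fin.ext_iff] using h
  rcases lt_trichotomy i i' with hc | hc | hc
  · have := encv_anti hf i i' hc; omega
  · exact hc
  · have := encv_anti hf i' i hc; omega

lemma card_enc {f : Fin n → ℕ} (hf : Antitone f) (hb : ∀ i, f i ≤ n+1) :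
    #(enc f hb) = n := by
  rw [enc, Finset.card_image_of_injective _ (enc_inj hf hb)]
  simp

lemma sig_enc {f : Fin n → ℕ} (hf : Antitone f) (hb : ∀ i, f i ≤ n+1) (k : ℕ) :
    sig (enc f hb) k = #(univ.filter (fun i : Fin n => k ≤ encv f i)) := by
  rw [sig, enc, Finset.filter_image, Finset.card_image_of_injective _ (enc_inj hf hb)]

lemma le_iff_sig {f g : Fin n → ℕ} (hf : Antitone f) (hg : Antitone g)
    (hbf : ∀ i, f i ≤ n+1) (hbg : ∀ i, g i ≤ n+1) :
    (∀ i, f i ≤ g i) ↔ ∀ k, sig (enc f hbf) k ≤ sig (enc g hbg) k := by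
  constructor
  · intro h k
    rw [sig_enc hf hbf, sig_enc hg hbg]
    apply Finset.card_le_card
    intro i hi
    rw [Finset.mem_filter] at hi ⊢
    refine ⟨mem_univ _, ?_⟩
    have := h i
    unfold encv at *
    omega
  · intro h i
    have hk := h (encv f i)
    rw [sig_enc hf hbf, sig_enc hg hbg] at hk
    have h1 : i.val + 1 ≤ #(univ.filter (fun i' : Fin n => encv f i ≤ encv f i')) := by
      have hsub : univ.filter (fun i' : Fin n => i'.val < i.val + 1)
          ⊆ univ.filter (fun i' : Fin n => encv f i ≤ encv f i') := by
        intro i' hi'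
        rw [Finset.mem_filter] at hi' ⊢
        refine ⟨mem_univ _, ?_⟩
        have hle : i' ≤ i := by rw [Fin.le_def]; omega
        have := hf hle
        have := i.isLt
        rw [Fin.le_def] at hle
        unfold encv; omega
      have := Finset.card_le_card hsub
      rw [card_filter_lt] at this
      have := i.isLt
      omega
    by_contra hgi
    have h2 : (univ.filter (fun i' : Fin n => encv f i ≤ encv g i'))
        ⊆ univ.filter (fun i' : Fin n => i'.val < i.val) := by
      intro i' hi'
      rw [Finset.mem_filter] at hi' ⊢
      refine ⟨mem_univ _, ?_⟩
      by_contra hcon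
      have hle : i ≤ i' := by rw [Fin.le_def]; omega
      have hgg := hg hle
      rw [Fin.le_def] at hle
      have hb2 := hi'.2
      unfold encv at *
      omega
    have := Finset.card_le_card h2
    rw [card_filter_lt] at this
    have := i.isLt
    omega

/-- proof-free access to the increasing enumeration of `S`. -/
def emb (S : Finset (Fin (2*n+1))) (h : #S = n) (a : ℕ) : ℕ :=
  if ha : a < n then (S.orderEmbOfFin h ⟨a, ha⟩).val else 0

lemma emb_lt (S : Finset (Fin (2*n+1))) (h : #S = n) {a : ℕ} (ha : a < n) :
    emb S h a < 2*n+1 := by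
  rw [emb, dif_pos ha]
  exact (S.orderEmbOfFin h ⟨a, ha⟩).isLt

lemma emb_strict (S : Finset (Fin (2*n+1))) (h : #S = n) {a b : ℕ}
    (hab : a < b) (hb : b < n) :
    emb S h a < emb S h b := by
  rw [emb, emb, dif_pos (by omega : a < n), dif_pos hb]
  have h2 : S.orderEmbOfFin h ⟨a, by omega⟩ < S.orderEmbOfFin h ⟨b, hb⟩ :=
    (OrderEmbedding.lt_iff_lt (S.orderEmbOfFin h)).mpr (by rw [Fin.lt_def]; exact hab)
  exact h2

lemma emb_gap (S : Finset (Fin (2*n+1))) (h : #S = n) :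
    ∀ (b a : ℕ), a ≤ b → b < n → emb S h a + (b - a) ≤ emb S h b := by
  intro b
  induction b with
  | zero =>
    intro a hab _
    have : a = 0 := by omega
    subst this; simp
  | succ b ih =>
    intro a hab hb
    rcases Nat.eq_or_lt_of_le hab with he | hlt
    · subst he; simp
    · have h1 := ih a (by omega) (by omega)
      have h2 := emb_strict S h (a := b) (b := b+1) (by omega) hb
      omega

lemma emb_mem (S : Finset (Fin (2*n+1))) (h : #S = n) {a : ℕ} (ha : a < n) :
    (⟨emb S h a, emb_lt S h ha⟩ : Fin (2*n+1)) ∈ S := by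
  have : (⟨emb S h a, emb_lt S h ha⟩ : Fin (2*n+1)) = S.orderEmbOfFin h ⟨a, ha⟩ := by
    apply Fin.ext
    show emb S h a = _
    rw [emb, dif_pos ha]
  rw [this]
  exact Finset.orderEmbOfFin_mem S h _

lemma emb_surj (S : Finset (Fin (2*n+1))) (h : #S = n) {x : Fin (2*n+1)} (hx : x ∈ S) :
    ∃ a, a < n ∧ emb S h a = x.val := by
  have : x ∈ Set.range (S.orderEmbOfFin h) := by
    rw [Finset.range_orderEmbOfFin]; exact hx
  obtain ⟨j, hj⟩ := this
  refine ⟨j.val, j.isLt, ?_⟩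
  rw [emb, dif_pos j.isLt]
  rw [← hj]

def dec (S : Finset (Fin (2*n+1))) (h : #S = n) : Fin n → ℕ :=
  fun i => emb S h (n - 1 - i.val) - (n - 1 - i.val)

lemma dec_lower (S : Finset (Fin (2*n+1))) (h : #S = n) (i : Fin n) :
    n - 1 - i.val ≤ emb S h (n - 1 - i.val) := by
  have hi := i.isLt
  have hg := emb_gap S h (n - 1 - i.val) 0 (by omega) (by omega)
  omega

lemma dec_upper (S : Finset (Fin (2*n+1))) (h : #S = n) (i : Fin n) :
    emb S h (n - 1 - i.val) + i.val ≤ 2*n := by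
  have hi := i.isLt
  have hg := emb_gap S h (n-1) (n - 1 - i.val) (by omega) (by omega)
  have hl := emb_lt S h (a := n-1) (by omega)
  omega

lemma dec_bound (S : Finset (Fin (2*n+1))) (h : #S = n) : ∀ i, dec S h i ≤ n+1 := by
  intro i
  have := i.isLt
  have h1 := dec_lower S h i
  have h2 := dec_upper S h i
  unfold dec
  omega

lemma dec_anti (S : Finset (Fin (2*n+1))) (h : #S = n) : Antitone (dec S h) := by
  intro i i' hle
  have hi := i.isLt
  have hi' := i'.isLt
  rw [Fin.le_def] at hle
  have hg := emb_gap S h (n - 1 - i.val) (n - 1 - i'.val) (by omega) (by omega)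
  have h1 := dec_lower S h i
  have h2 := dec_lower S h i'
  unfold dec
  omega

lemma encv_dec (S : Finset (Fin (2*n+1))) (h : #S = n) (i : Fin n) :
    encv (dec S h) i = emb S h (n - 1 - i.val) := by
  have h1 := dec_lower S h i
  unfold encv dec
  omega

lemma enc_dec (S : Finset (Fin (2*n+1))) (h : #S = n) :
    enc (dec S h) (dec_bound S h) = S := by
  ext x
  rw [enc, Finset.mem_image]
  constructor
  · rintro ⟨i, _, hi⟩
    have hx : x = (⟨emb S h (n - 1 - i.val),
        emb_lt S h (by have := i.isLt; omega)⟩ : Fin (2*n+1)) := by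
      rw [← hi]
      apply Fin.ext
      exact encv_dec S h i
    rw [hx]
    exact emb_mem S h (by have := i.isLt; omega)
  · intro hx
    obtain ⟨a, ha, hav⟩ := emb_surj S h hx
    refine ⟨⟨n - 1 - a, by omega⟩, mem_univ _, ?_⟩
    apply Fin.ext
    show encv (dec S h) _ = x.val
    rw [encv_dec S h (⟨n - 1 - a, by omega⟩ : Fin n)]
    have : n - 1 - (⟨n - 1 - a, by omega⟩ : Fin n).val = a := by
      show n - 1 - (n - 1 - a) = a
      omega
    rw [this, hav]

lemma emb_enc {f : Fin n → ℕ} (hf : Antitone f) (hb : ∀ i, f i ≤ n+1) {a : ℕ} (ha : a < n) :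
    emb (enc f hb) (card_enc hf hb) a = f ⟨n - 1 - a, by omega⟩ + a := by
  have hu : (fun j : Fin n =>
      (⟨f ⟨n - 1 - j.val, by have := j.isLt; omega⟩ + j.val,
        by have := hb (⟨n - 1 - j.val, by have := j.isLt; omega⟩ : Fin n);
           have := j.isLt; omega⟩ : Fin (2*n+1)))
      = ⇑((enc f hb).orderEmbOfFin (card_enc hf hb)) := by
    apply Finset.orderEmbOfFin_unique
    · intro j
      have hj := j.isLt
      rw [enc, Finset.mem_image]
      refine ⟨⟨n - 1 - j.val, by omega⟩, mem_univ _, ?_⟩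
      apply Fin.ext
      show encv f _ = _
      rw [encv]
      show f _ + (n - 1 - (n - 1 - j.val)) = f _ + j.val
      congr 1
      omega
    · intro j j' hjj
      rw [Fin.lt_def]
      show f _ + j.val < f _ + j'.val
      rw [Fin.lt_def] at hjj
      have hj' := j'.isLt
      have hmm : (⟨n - 1 - j'.val, by omega⟩ : Fin n) ≤ ⟨n - 1 - j.val, by have := j.isLt; omega⟩ := by
        rw [Fin.le_def]
        show n - 1 - j'.val ≤ n - 1 - j.val
        omega
      have := hf hmm
      omega
  rw [emb, dif_pos ha, ← hu]

lemma dec_enc {f : Fin n → ℕ} (hf : Antitone f) (hb : ∀ i, f i ≤ n+1) :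
    dec (enc f hb) (card_enc hf hb) = f := by
  funext i
  have hi := i.isLt
  unfold dec
  rw [emb_enc hf hb (by omega : n - 1 - i.val < n)]
  have : (⟨n - 1 - (n - 1 - i.val), by omega⟩ : Fin n) = i := by
    apply Fin.ext
    show n - 1 - (n - 1 - i.val) = i.val
    omega
  rw [this]
  omega

end Enc


section Low3
variable {n : ℕ}

def lowToFun3 (L : Finset (Fin 2 × Fin n × Fin (n+1))) : Fin 2 × Fin n → ℕ :=
  fun x => #(univ.filter (fun j : Fin (n+1) => (x.1, x.2, j) ∈ L))

lemma lowToFun3_mem {L : Finset (Fin 2 × Fin n × Fin (n+1))}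
    (hL : IsLowerSet (L : Set (Fin 2 × Fin n × Fin (n+1))))
    (x : Fin 2 × Fin n) (j : Fin (n+1)) : (x.1, x.2, j) ∈ L ↔ j.val < lowToFun3 L x := by
  rw [lowToFun3]
  have hmem : (x.1, x.2, j) ∈ L
      ↔ j ∈ univ.filter (fun j : Fin (n+1) => (x.1, x.2, j) ∈ L) := by simp
  rw [hmem]
  apply mem_iff_lt_card
  intro j j' hle hj
  rw [Finset.mem_filter] at hj ⊢
  refine ⟨mem_univ _, hL ?_ hj.2⟩
  exact Prod.mk_le_mk.mpr ⟨le_refl _, Prod.mk_le_mk.mpr ⟨le_refl _, hle⟩⟩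

def lowEquivFun3 : {L : Finset (Fin 2 × Fin n × Fin (n+1)) //
      IsLowerSet (L : Set (Fin 2 × Fin n × Fin (n+1)))}
    ≃ {F : Fin 2 × Fin n → ℕ // Antitone F ∧ ∀ x, F x ≤ n+1} where
  toFun L := ⟨lowToFun3 L.1, by
    constructor
    · intro x x' hx
      apply Finset.card_le_card
      intro j hj
      rw [Finset.mem_filter] at hj ⊢
      refine ⟨mem_univ _, L.2 ?_ hj.2⟩
      exact Prod.mk_le_mk.mpr ⟨hx.1, Prod.mk_le_mk.mpr ⟨hx.2, le_refl _⟩⟩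
    · intro x
      calc #(univ.filter (fun j : Fin (n+1) => (x.1, x.2, j) ∈ L.1))
          ≤ #(univ : Finset (Fin (n+1))) := Finset.card_le_card (Finset.filter_subset _ _)
        _ = n+1 := by simp⟩
  invFun F := ⟨univ.filter (fun z : Fin 2 × Fin n × Fin (n+1) => z.2.2.val < F.1 (z.1, z.2.1)), by
    rintro ⟨c, i, j⟩ ⟨c', i', j'⟩ ⟨hc, hi, hj⟩ hmem
    rw [Finset.mem_coe, Finset.mem_filter] at hmem ⊢
    refine ⟨mem_univ _, ?_⟩
    have h1 : F.1 (c, i) ≤ F.1 (c', i') := F.2.1 (Prod.mk_le_mk.mpr ⟨hc, hi⟩)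
    have h2 : j'.val ≤ j.val := hj
    have h3 : j.val < F.1 (c, i) := hmem.2
    show j'.val < F.1 (c', i')
    omega⟩
  left_inv L := by
    apply Subtype.ext
    dsimp only
    ext z
    obtain ⟨c, i, j⟩ := z
    rw [Finset.mem_filter]
    have := (lowToFun3_mem L.2 (c, i) j).symm
    simpa using this
  right_inv F := by
    apply Subtype.ext
    dsimp only
    funext x
    rw [lowToFun3]
    have he : (univ.filter (fun j : Fin (n+1) =>
        ((x.1, x.2, j) : Fin 2 × Fin n × Fin (n+1)) ∈
          univ.filter (fun z : Fin 2 × Fin n × Fin (n+1) => z.2.2.val < F.1 (z.1, z.2.1))))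
        = univ.filter (fun j : Fin (n+1) => j.val < F.1 x) := by
      ext j
      rw [Finset.mem_filter, Finset.mem_filter, Finset.mem_filter]
      simp
    rw [he, card_filter_lt, min_eq_left (F.2.2 x)]

end Low3

section Pair
variable {n : ℕ}

def pairEquiv :
    {p : (Fin n → ℕ) × (Fin n → ℕ) //
        (Antitone p.1 ∧ ∀ i, p.1 i ≤ n+1) ∧ (Antitone p.2 ∧ ∀ i, p.2 i ≤ n+1) ∧
          ∀ i, p.2 i ≤ p.1 i}
    ≃ {q : Finset (Fin (2*n+1)) × Finset (Fin (2*n+1)) //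
        (#q.1 = n ∧ #q.2 = n) ∧ Dom q.1 q.2} where
  toFun p := ⟨(enc p.1.2 p.2.2.1.2, enc p.1.1 p.2.1.2), by
    exact ⟨⟨card_enc p.2.2.1.1 p.2.2.1.2, card_enc p.2.1.1 p.2.1.2⟩,
      (dom_iff _ _).mpr ((le_iff_sig p.2.2.1.1 p.2.1.1 p.2.2.1.2 p.2.1.2).mp p.2.2.2)⟩⟩
  invFun q := ⟨(dec q.1.2 q.2.1.2, dec q.1.1 q.2.1.1), by
    have hcross : ∀ i, dec q.1.1 q.2.1.1 i ≤ dec q.1.2 q.2.1.2 i := by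
      apply (le_iff_sig (dec_anti q.1.1 q.2.1.1) (dec_anti q.1.2 q.2.1.2)
        (dec_bound _ _) (dec_bound _ _)).mpr
      intro k
      rw [enc_dec, enc_dec]
      exact (dom_iff _ _).mp q.2.2 k
    exact ⟨⟨dec_anti _ _, dec_bound _ _⟩, ⟨dec_anti _ _, dec_bound _ _⟩, hcross⟩⟩
  left_inv p := by
    apply Subtype.ext
    obtain ⟨⟨g, f⟩, ⟨hg, hgb⟩, ⟨hf, hfb⟩, hfg⟩ := p
    exact Prod.ext (dec_enc hg hgb) (dec_enc hf hfb)
  right_inv q := by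
    apply Subtype.ext
    exact Prod.ext (enc_dec _ _) (enc_dec _ _)

end Pair

lemma key_id (n : ℕ) (hn : 1 ≤ n) :
    (2*n+1).choose n * (2*n+1).choose n
      = (2*n+1) * catalan n * catalan (n+1)
        + (2*n+1).choose (n+1) * (2*n+1).choose (n-1) := by
  have h1 : (n+1) * catalan n = Nat.centralBinom n := succ_mul_catalan_eq_centralBinom n
  have h2 : (n+2) * catalan (n+1) = Nat.centralBinom (n+1) := succ_mul_catalan_eq_centralBinom (n+1)
  have hc1 : Nat.centralBinom n = (2*n).choose n := rfl
  have hc2 : Nat.centralBinom (n+1) = (2*(n+1)).choose (n+1) := rfl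
  have hsymm : (2*n+1).choose (n+1) = (2*n+1).choose n := by
    have := Nat.choose_symm (n := 2*n+1) (k := n+1) (by omega)
    have e : 2*n+1 - (n+1) = n := by omega
    rw [e] at this
    exact this.symm
  have h4 : (2*n+1).choose n * n = (2*n+1).choose (n-1) * (n+2) := by
    have := Nat.choose_succ_right_eq (2*n+1) (n-1)
    have e1 : n - 1 + 1 = n := by omega
    have e2 : 2*n+1 - (n-1) = n+2 := by omega
    rw [e1, e2] at this
    exact this
  have h5 : (2*n+1) * (2*n).choose n = (2*n+1).choose (n+1) * (n+1) := by
    have := Nat.add_one_mul_choose_eq (2*n) n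
    have e : (2*n).succ = 2*n+1 := rfl
    exact this
  have h6 : (2*(n+1)).choose (n+1) = 2 * ((2*n+1).choose n) := by
    have e : 2*(n+1) = (2*n+1)+1 := by omega
    rw [e, Nat.choose_succ_succ (2*n+1) n, hsymm]
    omega
  have H1 : ((n:ℤ)+1) * (catalan n : ℤ) = ((2*n).choose n : ℤ) := by
    exact_mod_cast congrArg (Nat.cast : ℕ → ℤ) (h1.trans hc1)
  have H2 : ((n:ℤ)+2) * (catalan (n+1) : ℤ) = 2 * ((2*n+1).choose n : ℤ) := by
    exact_mod_cast congrArg (Nat.cast : ℕ → ℤ) ((h2.trans hc2).trans h6)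
  have H4 : ((2*n+1).choose n : ℤ) * (n:ℤ) = ((2*n+1).choose (n-1) : ℤ) * ((n:ℤ)+2) := by
    exact_mod_cast congrArg (Nat.cast : ℕ → ℤ) h4
  have H5 : (2*(n:ℤ)+1) * ((2*n).choose n : ℤ) = ((2*n+1).choose n : ℤ) * ((n:ℤ)+1) := by
    have := congrArg (Nat.cast : ℕ → ℤ) (h5.trans (by rw [hsymm]))
    push_cast at this
    linarith [this]
  have hZ : ((n:ℤ)+1) * ((n:ℤ)+2) * (((2*n+1).choose n : ℤ) * ((2*n+1).choose n : ℤ))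
      = ((n:ℤ)+1) * ((n:ℤ)+2) *
          ((2*(n:ℤ)+1) * (catalan n : ℤ) * (catalan (n+1) : ℤ)
            + ((2*n+1).choose n : ℤ) * ((2*n+1).choose (n-1) : ℤ)) := by
    linear_combination (-(2*(n:ℤ)+1)*((n:ℤ)+2)*(catalan (n+1):ℤ)) * H1
      + (-(2*(n:ℤ)+1)*((2*n).choose n : ℤ)) * H2
      + (((n:ℤ)+1)*((2*n+1).choose n : ℤ)) * H4
      + (-2*((2*n+1).choose n : ℤ)) * H5
  have hcancel := mul_left_cancel₀
    (a := ((n:ℤ)+1) * ((n:ℤ)+2)) (by positivity) hZ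
  have hfin : (((2*n+1).choose n * (2*n+1).choose n : ℕ) : ℤ)
      = (((2*n+1) * catalan n * catalan (n+1)
          + (2*n+1).choose (n+1) * (2*n+1).choose (n-1) : ℕ) : ℤ) := by
    push_cast
    rw [hsymm]
    push_cast
    linarith [hcancel]
  exact_mod_cast hfin

end Stmt13

/-- The number of antichains of `[2] × [n] × [n+1]` is `(2n+1)·Cₙ·C_{n+1}`. -/
theorem stmt_13 (n : ℕ) :
    Nat.card {A : Finset (Fin 2 × Fin n × Fin (n + 1)) //
        IsAntichain (· ≤ ·) (A : Set (Fin 2 × Fin n × Fin (n + 1)))}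
      = (2 * n + 1) * catalan n * catalan (n + 1) := by
  classical
  have hchain := Nat.card_congr
    ((Stmt13.achEquivLow (α := Fin 2 × Fin n × Fin (n+1))).trans
      ((Stmt13.lowEquivFun3 (n := n)).trans
        ((Stmt13.splitEquiv (n := n) (c := n+1)).trans (Stmt13.pairEquiv (n := n)))))
  rw [hchain, Nat.card_eq_fintype_card]
  rcases n with _ | m
  · have hr : (2 * 0 + 1) * catalan 0 * catalan (0 + 1) = 1 := by
      norm_num [catalan_one]
    rw [hr, Fintype.card_eq_one_iff]
    refine ⟨⟨(∅, ∅), ⟨⟨rfl, rfl⟩, ?_⟩⟩, ?_⟩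
    · intro k _
      simp [Stmt13.sig]
    · rintro ⟨⟨S, T⟩, ⟨⟨hS, hT⟩, _⟩⟩
      apply Subtype.ext
      have hS' : S = ∅ := Finset.card_eq_zero.mp hS
      have hT' : T = ∅ := Finset.card_eq_zero.mp hT
      simp [hS', hT']
  · have hd := Stmt13.card_dom (2*(m+1)+1) m
    have hk := Stmt13.key_id (m+1) (by omega)
    have e1 : m + 1 + 1 = m + 2 := rfl
    have e2 : m + 1 - 1 = m := rfl
    rw [e1, e2] at hk
    rw [show catalan (m + 1 + 1) = catalan (m + 2) from rfl]
    omega
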